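/- arXiv:math/0509067 — 5 statements merged into one kernel-verified Lean document; each statement's English description precedes it below -/
import Mathlib

section
/- The Fermat curve C in P^2 over F_{p^2} defined by x_0^{p+1} + x_1^{p+1} + x_2^{p+1} = 0 has exactly p^3 + 1 points rational over F_{p^2}. -/
open Finset Polynomial

namespace FermatCurveAux

variable (p : ℕ) [Fact p.Prime]

noncomputable instance : Fintype (GaloisField p 2) := Fintype.ofFinite _
noncomputable instance : DecidableEq (GaloisField p 2) := Classical.decEq _

lemma card_K : Fintype.card (GaloisField p 2) = p ^ 2 := by
  rw [← Nat.card_eq_fintype_card, GaloisField.card p 2 (by norm_num)]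

lemma pow_card (z : GaloisField p 2) : z ^ p ^ 2 = z := by
  have := FiniteField.pow_card z
  rwa [card_K] at this

lemma pow_pp (z : GaloisField p 2) : (z ^ (p + 1)) ^ p = z ^ (p + 1) := by
  rw [← pow_mul, show (p+1) * p = p^2 + p from by ring, pow_add, pow_card, pow_succ, mul_comm]

/-- number of solutions of `z ^ (p+1) = a`. -/
noncomputable def nA (a : GaloisField p 2) : ℕ :=
  (univ.filter fun z : GaloisField p 2 => z ^ (p + 1) = a).card

lemma nA_zero : nA p 0 = 1 := by
  have h : (univ.filter fun z : GaloisField p 2 => z ^ (p + 1) = 0) = {0} := by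
    ext z
    simp [pow_eq_zero_iff (Nat.succ_ne_zero p)]
  rw [nA, h, Finset.card_singleton]

lemma nA_le (a : GaloisField p 2) : nA p a ≤ p + 1 := by
  have hsub : (univ.filter fun z : GaloisField p 2 => z ^ (p + 1) = a)
      ⊆ (nthRoots (p + 1) a).toFinset := by
    intro z hz
    simp only [mem_filter, mem_univ, true_and] at hz
    rw [Multiset.mem_toFinset, mem_nthRoots (Nat.succ_pos p)]
    exact hz
  calc nA p a ≤ (nthRoots (p + 1) a).toFinset.card := Finset.card_le_card hsub
    _ ≤ Multiset.card (nthRoots (p + 1) a) := Multiset.toFinset_card_le _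
    _ ≤ p + 1 := Polynomial.card_nthRoots _ _

/-- the prime subfield as a finset -/
noncomputable def S0 : Finset (GaloisField p 2) := univ.filter fun a => a ^ p = a

lemma zero_mem_S0 : (0 : GaloisField p 2) ∈ S0 p := by
  have hp : p ≠ 0 := (Fact.out : p.Prime).ne_zero
  simp [S0, zero_pow hp]

lemma card_S0 : (S0 p).card = p := by
  have hp2 : 2 ≤ p := (Fact.out : p.Prime).two_le
  refine le_antisymm ?_ ?_
  · have hsub : S0 p ⊆ insert (0 : GaloisField p 2) (nthRoots (p - 1) 1).toFinset := by
      intro a ha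
      simp only [S0, mem_filter, mem_univ, true_and] at ha
      rcases eq_or_ne a 0 with rfl | h0
      · exact Finset.mem_insert_self _ _
      · refine Finset.mem_insert_of_mem ?_
        rw [Multiset.mem_toFinset, mem_nthRoots (by omega : 0 < p - 1)]
        have : a ^ (p - 1) * a = 1 * a := by
          rw [one_mul, ← pow_succ]
          rw [show p - 1 + 1 = p from by omega]
          exact ha
        exact mul_right_cancel₀ h0 this
    calc (S0 p).card
        ≤ (insert (0 : GaloisField p 2) (nthRoots (p - 1) 1).toFinset).card :=
          Finset.card_le_card hsub
      _ ≤ (nthRoots (p - 1) (1 : GaloisField p 2)).toFinset.card + 1 := Finset.card_insert_le _ _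
      _ ≤ Multiset.card (nthRoots (p - 1) (1 : GaloisField p 2)) + 1 :=
          Nat.add_le_add_right (Multiset.toFinset_card_le _) _
      _ ≤ (p - 1) + 1 := Nat.add_le_add_right (Polynomial.card_nthRoots _ _) _
      _ = p := by omega
  · have hinj : Function.Injective (algebraMap (ZMod p) (GaloisField p 2)) :=
      (algebraMap (ZMod p) (GaloisField p 2)).injective
    have hsub : (univ : Finset (ZMod p)).image (algebraMap (ZMod p) (GaloisField p 2))
        ⊆ S0 p := by
      intro a ha
      simp only [Finset.mem_image] at ha
      obtain ⟨x, -, rfl⟩ := ha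
      simp only [S0, mem_filter, mem_univ, true_and]
      rw [← map_pow, ZMod.pow_card]
    calc p = Fintype.card (ZMod p) := (ZMod.card p).symm
      _ = (univ : Finset (ZMod p)).card := (Finset.card_univ).symm
      _ = ((univ : Finset (ZMod p)).image (algebraMap (ZMod p) (GaloisField p 2))).card :=
          (Finset.card_image_of_injective _ hinj).symm
      _ ≤ (S0 p).card := Finset.card_le_card hsub

lemma sum_fiber : ∑ a ∈ S0 p, nA p a = p ^ 2 := by
  have := Finset.card_eq_sum_card_fiberwise
    (f := fun z : GaloisField p 2 => z ^ (p + 1)) (s := univ) (t := S0 p)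
    (fun z _ => by simp only [S0, Finset.mem_coe, mem_filter, mem_univ, true_and]; exact pow_pp p z)
  rw [Finset.card_univ, card_K] at this
  exact this.symm

lemma nA_of_ne (a : GaloisField p 2) (h0 : a ≠ 0) (ha : a ^ p = a) : nA p a = p + 1 := by
  have hmem : a ∈ (S0 p).erase 0 := by
    simp only [Finset.mem_erase]
    exact ⟨h0, by simp [S0, ha]⟩
  have hsum : ∑ b ∈ (S0 p).erase 0, nA p b = p ^ 2 - 1 := by
    have h1 : ∑ b ∈ (S0 p).erase 0, nA p b + nA p 0 = ∑ b ∈ S0 p, nA p b :=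
      Finset.sum_erase_add _ _ (zero_mem_S0 p)
    rw [nA_zero, sum_fiber] at h1
    omega
  have hcard : ((S0 p).erase 0).card = p - 1 := by
    rw [Finset.card_erase_of_mem (zero_mem_S0 p), card_S0]
  refine le_antisymm (nA_le p a) ?_
  by_contra h
  push_neg at h
  have hlt : ∑ b ∈ (S0 p).erase 0, nA p b < ∑ b ∈ (S0 p).erase 0, (p + 1) :=
    Finset.sum_lt_sum (fun b _ => nA_le p b) ⟨a, hmem, h⟩
  rw [Finset.sum_const, smul_eq_mul, hsum, hcard] at hlt
  have hp2 : 2 ≤ p := (Fact.out : p.Prime).two_le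
  obtain ⟨k, rfl⟩ : ∃ k, p = k + 1 := ⟨p - 1, by omega⟩
  rw [show (k+1)^2 = k^2 + 2*k + 1 from by ring] at hlt
  have : (k + 1 - 1) * (k + 1 + 1) = k^2 + 2*k := by
    rw [Nat.add_sub_cancel]; ring
  omega


lemma neg_pow_p (s : GaloisField p 2) : (-s) ^ p = -(s ^ p) := by
  have := map_neg (frobenius (GaloisField p 2) p) s
  simpa [frobenius_def] using this

lemma add_pow_p (s t : GaloisField p 2) : (s + t) ^ p = s ^ p + t ^ p := by
  have := map_add (frobenius (GaloisField p 2) p) s t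
  simpa [frobenius_def] using this

lemma nA_neg (s : GaloisField p 2) (hs : s ^ p = s) (h0 : s ≠ 0) : nA p (-s) = p + 1 :=
  nA_of_ne p _ (neg_ne_zero.mpr h0) (by rw [neg_pow_p, hs])

lemma card_Z :
    (univ.filter fun t : GaloisField p 2 × GaloisField p 2 =>
      t.1 ^ (p + 1) + t.2 ^ (p + 1) = 0).card = 1 + (p ^ 2 - 1) * (p + 1) := by
  rw [Finset.card_eq_sum_card_fiberwise
    (f := Prod.snd) (t := (univ : Finset (GaloisField p 2))) (fun t _ => mem_univ _)]
  have hfib : ∀ y : GaloisField p 2,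
      ((univ.filter fun t : GaloisField p 2 × GaloisField p 2 =>
        t.1 ^ (p + 1) + t.2 ^ (p + 1) = 0).filter fun t => t.2 = y) =
      ((univ.filter fun x : GaloisField p 2 =>
        x ^ (p + 1) = -(y ^ (p + 1))).image fun x => (x, y)) := by
    intro y
    ext ⟨a, b⟩
    simp only [Finset.mem_filter, Finset.mem_image, mem_univ, true_and, Prod.mk.injEq]
    constructor
    · rintro ⟨hab, rfl⟩
      exact ⟨a, by linear_combination hab, rfl, rfl⟩
    · rintro ⟨x, hx, rfl, rfl⟩
      exact ⟨by linear_combination hx, rfl⟩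
  have hterm : ∀ y : GaloisField p 2,
      ((univ.filter fun t : GaloisField p 2 × GaloisField p 2 =>
        t.1 ^ (p + 1) + t.2 ^ (p + 1) = 0).filter fun t => t.2 = y).card
      = nA p (-(y ^ (p + 1))) := by
    intro y
    rw [hfib y, Finset.card_image_of_injective _ (fun a b h => (Prod.mk.injEq _ _ _ _).mp h |>.1)]
    rfl
  rw [Finset.sum_congr rfl fun y _ => hterm y]
  rw [← Finset.sum_erase_add _ _ (mem_univ (0 : GaloisField p 2))]
  have h0 : nA p (-((0 : GaloisField p 2) ^ (p + 1))) = 1 := by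
    rw [zero_pow (Nat.succ_ne_zero p), neg_zero, nA_zero]
  have hne : ∀ y ∈ (univ : Finset (GaloisField p 2)).erase 0,
      nA p (-(y ^ (p + 1))) = p + 1 := by
    intro y hy
    have hy0 : y ≠ 0 := (Finset.mem_erase.mp hy).1
    exact nA_neg p _ (pow_pp p y) (pow_ne_zero _ hy0)
  rw [Finset.sum_congr rfl hne, Finset.sum_const, smul_eq_mul, h0,
    Finset.card_erase_of_mem (mem_univ _), Finset.card_univ, card_K]
  omega

lemma card_N :
    (univ.filter fun v : Fin 3 → GaloisField p 2 => ∑ i, v i ^ (p + 1) = 0).card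
      = (p ^ 3 + 1) * (p ^ 2 - 1) + 1 := by
  rw [Finset.card_eq_sum_card_fiberwise
    (f := fun v => (v 0, v 1)) (t := (univ : Finset (GaloisField p 2 × GaloisField p 2)))
    (fun v _ => mem_univ _)]
  have hterm : ∀ t : GaloisField p 2 × GaloisField p 2,
      ((univ.filter fun v : Fin 3 → GaloisField p 2 => ∑ i, v i ^ (p + 1) = 0).filter
        fun v => (v 0, v 1) = t).card
      = nA p (-(t.1 ^ (p + 1) + t.2 ^ (p + 1))) := by
    rintro ⟨x, y⟩
    have hfib : ((univ.filter fun v : Fin 3 → GaloisField p 2 => ∑ i, v i ^ (p + 1) = 0).filter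
        fun v => (v 0, v 1) = (x, y)) =
        ((univ.filter fun z : GaloisField p 2 =>
          z ^ (p + 1) = -(x ^ (p + 1) + y ^ (p + 1))).image fun z => ![x, y, z]) := by
      ext v
      simp only [Finset.mem_filter, Finset.mem_image, mem_univ, true_and, Prod.mk.injEq,
        Fin.sum_univ_three]
      constructor
      · rintro ⟨hsum, h0, h1⟩
        refine ⟨v 2, by rw [← h0, ← h1]; linear_combination hsum, ?_⟩
        funext i
        fin_cases i <;> simp [h0, h1]
      · rintro ⟨z, hz, rfl⟩
        refine ⟨?_, rfl, rfl⟩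
        simp only [Matrix.cons_val_zero, Matrix.cons_val_one, Matrix.head_cons,
          Matrix.cons_val_two, Matrix.tail_cons]
        linear_combination hz
    rw [hfib, Finset.card_image_of_injective]
    · rfl
    · intro a b h
      have := congrFun h 2
      simpa using this
  rw [Finset.sum_congr rfl fun t _ => hterm t]
  rw [← Finset.sum_filter_add_sum_filter_not (univ : Finset (GaloisField p 2 × GaloisField p 2))
    (fun t => t.1 ^ (p + 1) + t.2 ^ (p + 1) = 0)]
  have h1 : ∑ t ∈ (univ.filter fun t : GaloisField p 2 × GaloisField p 2 =>
      t.1 ^ (p + 1) + t.2 ^ (p + 1) = 0), nA p (-(t.1 ^ (p + 1) + t.2 ^ (p + 1)))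
      = 1 + (p ^ 2 - 1) * (p + 1) := by
    rw [Finset.sum_congr rfl (fun t ht => by
      rw [(Finset.mem_filter.mp ht).2, neg_zero, nA_zero]), Finset.sum_const, smul_eq_mul,
      mul_one, card_Z]
  have h2 : ∑ t ∈ (univ.filter fun t : GaloisField p 2 × GaloisField p 2 =>
      ¬ (t.1 ^ (p + 1) + t.2 ^ (p + 1) = 0)), nA p (-(t.1 ^ (p + 1) + t.2 ^ (p + 1)))
      = (p ^ 4 - (1 + (p ^ 2 - 1) * (p + 1))) * (p + 1) := by
    rw [Finset.sum_congr rfl (fun t ht => by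
      have hne := (Finset.mem_filter.mp ht).2
      have hs : (t.1 ^ (p + 1) + t.2 ^ (p + 1)) ^ p = t.1 ^ (p + 1) + t.2 ^ (p + 1) := by
        rw [add_pow_p, pow_pp, pow_pp]
      exact nA_neg p _ hs hne), Finset.sum_const, smul_eq_mul]
    congr 1
    have hcards := Finset.card_filter_add_card_filter_not
      (s := (univ : Finset (GaloisField p 2 × GaloisField p 2)))
      (p := fun t => t.1 ^ (p + 1) + t.2 ^ (p + 1) = 0)
    rw [Finset.card_univ, Fintype.card_prod, card_K, card_Z] at hcards
    have hpow : p ^ 2 * p ^ 2 = p ^ 4 := by ring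
    omega
  rw [h1, h2]
  have hp2 : 2 ≤ p := (Fact.out : p.Prime).two_le
  obtain ⟨k, rfl⟩ : ∃ k, p = k + 1 := ⟨p - 1, by omega⟩
  have e2 : (k + 1) ^ 2 - 1 = k ^ 2 + 2 * k := by
    have h : (k + 1) ^ 2 = k ^ 2 + 2 * k + 1 := by ring
    omega
  rw [e2]
  have e4 : (k + 1) ^ 4 - (1 + (k ^ 2 + 2 * k) * (k + 1 + 1)) = k ^ 4 + 3 * k ^ 3 + 2 * k ^ 2 := by
    have h : (k + 1) ^ 4 = 1 + (k ^ 2 + 2 * k) * (k + 1 + 1) + (k ^ 4 + 3 * k ^ 3 + 2 * k ^ 2) := by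
      ring
    omega
  rw [e4]
  ring


lemma hom_smul (a : (GaloisField p 2)ˣ) (v : Fin 3 → GaloisField p 2) :
    ∑ i : Fin 3, ((a • v) i) ^ (p + 1)
      = (a : GaloisField p 2) ^ (p + 1) * ∑ i : Fin 3, v i ^ (p + 1) := by
  rw [Finset.mul_sum]
  refine Finset.sum_congr rfl fun i _ => ?_
  simp [Units.smul_def, mul_pow]

lemma units_smul_cancel {a b : (GaloisField p 2)ˣ} {w : Fin 3 → GaloisField p 2}
    (hw : w ≠ 0) (h : a • w = b • w) : a = b := by
  obtain ⟨i, hi⟩ := Function.ne_iff.mp hw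
  have h' := congrFun h i
  simp only [Pi.smul_apply, Units.smul_def, smul_eq_mul] at h'
  exact Units.ext (mul_right_cancel₀ hi h')

lemma zero_of_smul_zero (a : (GaloisField p 2)ˣ) (v : Fin 3 → GaloisField p 2)
    (hv : ∑ i : Fin 3, v i ^ (p + 1) = 0) :
    ∑ i : Fin 3, ((a • v) i) ^ (p + 1) = 0 := by
  rw [hom_smul, hv, mul_zero]

noncomputable def equivE :
    {v : Fin 3 → GaloisField p 2 // v ≠ 0 ∧ ∑ i : Fin 3, v i ^ (p + 1) = 0} ≃
    {x : Projectivization (GaloisField p 2) (Fin 3 → GaloisField p 2) //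
      ∑ i : Fin 3, (x.rep i) ^ (p + 1) = 0} × (GaloisField p 2)ˣ := by
  have key : ∀ v : {v : Fin 3 → GaloisField p 2 // v ≠ 0 ∧ ∑ i : Fin 3, v i ^ (p + 1) = 0},
      ∃ a : (GaloisField p 2)ˣ,
        a • (Projectivization.mk (GaloisField p 2) v.1 v.2.1).rep = v.1 := by
    intro v
    exact (Projectivization.mk_eq_mk_iff _ v.1 _ v.2.1
      (Projectivization.rep_nonzero _)).mp (Projectivization.mk_rep _).symm
  have hrep0 : ∀ v : {v : Fin 3 → GaloisField p 2 // v ≠ 0 ∧ ∑ i : Fin 3, v i ^ (p + 1) = 0},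
      ∑ i : Fin 3, ((Projectivization.mk (GaloisField p 2) v.1 v.2.1).rep i) ^ (p + 1) = 0 := by
    intro v
    obtain ⟨a, ha⟩ := key v
    have h2 := v.2.2
    rw [← ha, hom_smul] at h2
    exact (mul_eq_zero.mp h2).resolve_left (pow_ne_zero _ (Units.ne_zero a))
  refine
  { toFun := fun v =>
      (⟨Projectivization.mk (GaloisField p 2) v.1 v.2.1, hrep0 v⟩, Classical.choose (key v))
    invFun := fun y =>
      ⟨y.2 • y.1.1.rep, ⟨by
        rw [Units.smul_def]
        exact smul_ne_zero (Units.ne_zero _) (Projectivization.rep_nonzero _),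
        zero_of_smul_zero p y.2 _ y.1.2⟩⟩
    left_inv := fun v => Subtype.ext (Classical.choose_spec (key v))
    right_inv := fun y => ?_ }
  obtain ⟨⟨x, hx⟩, a⟩ := y
  have hxeq : Projectivization.mk (GaloisField p 2) (a • x.rep)
      (by rw [Units.smul_def]; exact smul_ne_zero (Units.ne_zero _) (Projectivization.rep_nonzero _))
      = x := by
    conv_rhs => rw [← Projectivization.mk_rep x]
    rw [Projectivization.mk_eq_mk_iff]
    exact ⟨a, rfl⟩
  refine Prod.ext (Subtype.ext hxeq) ?_
  have h1 : a • x.rep ≠ 0 := by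
    rw [Units.smul_def]
    exact smul_ne_zero (Units.ne_zero _) (Projectivization.rep_nonzero _)
  have h2 : ∑ i : Fin 3, ((a • x.rep) i) ^ (p + 1) = 0 := zero_of_smul_zero p a _ hx
  have hrepeq : (Projectivization.mk (GaloisField p 2) (a • x.rep) h1).rep = x.rep := by
    rw [hxeq]
  show Classical.choose (key ⟨a • x.rep, h1, h2⟩) = a
  have hb := Classical.choose_spec (key ⟨a • x.rep, h1, h2⟩)
  revert hb
  generalize Classical.choose (key ⟨a • x.rep, h1, h2⟩) = c
  intro hb
  rw [hrepeq] at hb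
  exact units_smul_cancel p (Projectivization.rep_nonzero x) hb


lemma card_nonzero :
    Nat.card {v : Fin 3 → GaloisField p 2 // v ≠ 0 ∧ ∑ i : Fin 3, v i ^ (p + 1) = 0}
      = (p ^ 3 + 1) * (p ^ 2 - 1) := by
  have hins : (univ.filter fun v : Fin 3 → GaloisField p 2 => ∑ i, v i ^ (p + 1) = 0)
      = insert 0 (univ.filter fun v : Fin 3 → GaloisField p 2 =>
          v ≠ 0 ∧ ∑ i, v i ^ (p + 1) = 0) := by
    ext v
    simp only [mem_filter, mem_univ, true_and, Finset.mem_insert]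
    constructor
    · intro hv
      rcases eq_or_ne v 0 with rfl | h
      · exact Or.inl rfl
      · exact Or.inr ⟨h, hv⟩
    · rintro (rfl | ⟨-, hv⟩)
      · simp [zero_pow (Nat.succ_ne_zero p)]
      · exact hv
  have hcard := card_N p
  rw [hins, Finset.card_insert_of_notMem (by simp)] at hcard
  rw [Nat.card_eq_fintype_card]
  rw [Fintype.card_subtype]
  exact Nat.add_right_cancel hcard

end FermatCurveAux

/-- The Fermat curve `x₀^{p+1} + x₁^{p+1} + x₂^{p+1} = 0` in the projective plane over
`𝔽_{p²}` has exactly `p³ + 1` points rational over `𝔽_{p²}`. -/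
theorem fermat_curve_card_points (p : ℕ) [Fact p.Prime] :
    Nat.card {x : Projectivization (GaloisField p 2) (Fin 3 → GaloisField p 2) //
      ∑ i : Fin 3, (x.rep i) ^ (p + 1) = 0} = p ^ 3 + 1 := by
  have e := Nat.card_congr (FermatCurveAux.equivE p)
  rw [Nat.card_prod, Nat.card_eq_fintype_card (α := (GaloisField p 2)ˣ), Fintype.card_units,
    FermatCurveAux.card_K, FermatCurveAux.card_nonzero] at e
  have hp2 : 2 ≤ p := (Fact.out : p.Prime).two_le
  have h4 : 4 ≤ p ^ 2 := by
    calc (4 : ℕ) = 2 ^ 2 := rfl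
      _ ≤ p ^ 2 := Nat.pow_le_pow_left hp2 2
  have hpos : 0 < p ^ 2 - 1 := by omega
  exact Nat.eq_of_mul_eq_mul_right hpos (by exact e.symm)
end

section
/- The affine curve Spec F_{p^2}[a,b]/(a^p λ^p + a λ - b^{p+1} λ^{p+1}) is reduced and irreducible for any λ ∈ F_{p^2}^× with λ^{p+1} + μ^{p+1} = 0 for some μ; equivalently, the polynomial a^p λ^p + a λ - b^{p+1} λ^{p+1} ∈ F_{p^2}[a,b] is irreducible. -/
open MvPolynomial

noncomputable def biEquiv (k : Type*) [CommSemiring k] :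
    MvPolynomial (Fin 2) k ≃ₐ[k] Polynomial (Polynomial k) :=
  (renameEquiv k (Equiv.swap (0 : Fin 2) 1)).trans <|
    (MvPolynomial.finSuccEquiv k 1).trans <|
      Polynomial.mapAlgEquiv <|
        (MvPolynomial.finSuccEquiv k 0).trans <|
          Polynomial.mapAlgEquiv (MvPolynomial.isEmptyAlgEquiv k (Fin 0))

set_option maxRecDepth 8000
set_option maxHeartbeats 1000000

theorem aux_eisenstein (k : Type*) [Field k] (p : ℕ) (hp2 : 2 ≤ p) (lam : k) (hlam : lam ≠ 0) :
    Irreducible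
      (Polynomial.C (Polynomial.C (lam ^ p) * Polynomial.X ^ p + Polynomial.C lam * Polynomial.X)
        - Polynomial.C (Polynomial.C (lam ^ (p + 1))) * Polynomial.X ^ (p + 1) :
        Polynomial (Polynomial k)) := by
  set q : Polynomial k := Polynomial.C (lam ^ p) * Polynomial.X ^ p
      + Polynomial.C lam * Polynomial.X with hq
  set c : Polynomial k := Polynomial.C (lam ^ (p + 1)) with hcdef
  set f : Polynomial (Polynomial k) := Polynomial.C q - Polynomial.C c * Polynomial.X ^ (p + 1)
    with hf
  have hlpow : lam ^ (p + 1) ≠ 0 := pow_ne_zero _ hlam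
  have hc0 : c ≠ 0 := fun h => hlpow (by simpa [hcdef] using h)
  have hcu : IsUnit c := Polynomial.isUnit_C.mpr hlpow.isUnit
  -- coefficients of f
  have hcoeff : ∀ n, f.coeff n =
      (if n = 0 then q else 0) - (if n = p + 1 then c else 0) := by
    intro n
    simp [hf, Polynomial.coeff_C, Polynomial.coeff_C_mul, Polynomial.coeff_X_pow]
  have hdeg : f.natDegree = p + 1 := by
    have h1 : (Polynomial.C c * Polynomial.X ^ (p + 1)).natDegree = p + 1 :=
      Polynomial.natDegree_C_mul_X_pow _ _ hc0
    have h2 : (Polynomial.C q : Polynomial (Polynomial k)).natDegree = 0 :=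
      Polynomial.natDegree_C _
    rw [hf, Polynomial.natDegree_sub_eq_right_of_natDegree_lt (by omega), h1]
  -- the prime ideal (X)
  set P : Ideal (Polynomial k) := Ideal.span {Polynomial.X} with hP
  have hPprime : P.IsPrime :=
    (Ideal.span_singleton_prime Polynomial.X_ne_zero).mpr Polynomial.prime_X
  have hqmem : q ∈ P := by
    rw [hP, Ideal.mem_span_singleton, Polynomial.X_dvd_iff]
    simp [hq, Polynomial.coeff_X_pow]
    omega
  have hEis : f.IsEisensteinAt P := by
    refine ⟨?_, ?_, ?_⟩
    · -- leading coeff ∉ P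
      have : f.leadingCoeff = -c := by
        rw [Polynomial.leadingCoeff, hdeg, hcoeff]
        simp
      rw [this, hP, Ideal.mem_span_singleton]
      intro hdvd
      rw [dvd_neg, hcdef, Polynomial.X_dvd_iff, Polynomial.coeff_C_zero] at hdvd
      exact hlpow hdvd
    · intro n hn
      rw [hdeg] at hn
      rw [hcoeff]
      rcases Nat.eq_zero_or_pos n with h0 | h0
      · subst h0; simpa using hqmem
      · rw [if_neg (by omega), if_neg (by omega), sub_zero]
        exact P.zero_mem
    · -- coeff 0 ∉ P ^ 2
      have h0 : f.coeff 0 = q := by rw [hcoeff]; simp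
      rw [h0, hP, Ideal.span_singleton_pow, Ideal.mem_span_singleton]
      rintro ⟨g, hg⟩
      have hzero : q.coeff 1 = 0 := by
        rw [hg, mul_comm, Polynomial.coeff_mul_X_pow']
        simp
      have hq1 : q.coeff 1 = lam := by
        rw [hq, Polynomial.coeff_add, Polynomial.coeff_C_mul, Polynomial.coeff_C_mul,
          Polynomial.coeff_X_pow, if_neg (by omega : ¬ (1 : ℕ) = p), Polynomial.coeff_X_one,
          mul_zero, zero_add, mul_one]
      rw [hq1] at hzero
      exact hlam hzero
  have hprim : f.IsPrimitive := by
    intro r hr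
    obtain ⟨g, hg⟩ := hr
    have hr' : r ∣ f.coeff (p + 1) := ⟨g.coeff (p + 1), by rw [hg, Polynomial.coeff_C_mul]⟩
    have : f.coeff (p + 1) = -c := by rw [hcoeff]; simp
    rw [this] at hr'
    exact isUnit_of_dvd_unit hr' hcu.neg
  exact hEis.irreducible hPprime hprim (by rw [hdeg]; omega)

/-- The polynomial `h = λ^p·a^p + λ·a - λ^{p+1}·b^{p+1}` in `𝔽_{p²}[a,b]` is irreducible,
for `λ ∈ 𝔽_{p²}^×` with `λ^{p+1} + μ^{p+1} = 0` for some `μ`; equivalently, the affine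
curve `Spec 𝔽_{p²}[a,b]/(h)` is reduced and irreducible (a domain). -/
theorem fermat_affine_curve_irreducible (p : ℕ) [Fact p.Prime] (hp : Odd p)
    (lam : GaloisField p 2) (hlam : lam ≠ 0)
    (hmu : ∃ mu : GaloisField p 2, lam ^ (p + 1) + mu ^ (p + 1) = 0) :
    Irreducible
      (C (lam ^ p) * X 0 ^ p + C lam * X 0 - C (lam ^ (p + 1)) * X 1 ^ (p + 1) :
        MvPolynomial (Fin 2) (GaloisField p 2)) ∧
    IsReduced
      (MvPolynomial (Fin 2) (GaloisField p 2) ⧸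
        Ideal.span {(C (lam ^ p) * X 0 ^ p + C lam * X 0 -
          C (lam ^ (p + 1)) * X 1 ^ (p + 1) : MvPolynomial (Fin 2) (GaloisField p 2))}) ∧
    IsDomain
      (MvPolynomial (Fin 2) (GaloisField p 2) ⧸
        Ideal.span {(C (lam ^ p) * X 0 ^ p + C lam * X 0 -
          C (lam ^ (p + 1)) * X 1 ^ (p + 1) : MvPolynomial (Fin 2) (GaloisField p 2))}) := by
  set h : MvPolynomial (Fin 2) (GaloisField p 2) :=
    C (lam ^ p) * X 0 ^ p + C lam * X 0 - C (lam ^ (p + 1)) * X 1 ^ (p + 1) with hh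
  have hp2 : 2 ≤ p := (Fact.out : p.Prime).two_le
  -- compute the image of h under biEquiv
  have h0 : biEquiv (GaloisField p 2) (X 0) = Polynomial.C Polynomial.X := by
    rw [biEquiv]
    simp only [AlgEquiv.trans_apply, renameEquiv_apply, rename_X]
    rw [show (Equiv.swap (0 : Fin 2) 1) 0 = Fin.succ 0 from rfl, finSuccEquiv_X_succ]
    simp [Polynomial.mapAlgEquiv, finSuccEquiv_X_zero]
  have h1 : biEquiv (GaloisField p 2) (X 1) = Polynomial.X := by
    rw [biEquiv]
    simp only [AlgEquiv.trans_apply, renameEquiv_apply, rename_X]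
    rw [show (Equiv.swap (0 : Fin 2) 1) 1 = 0 from rfl, finSuccEquiv_X_zero]
    simp [Polynomial.mapAlgEquiv]
  have hC : ∀ a : GaloisField p 2, biEquiv (GaloisField p 2) (C a) = Polynomial.C (Polynomial.C a) := by
    intro a
    have := (biEquiv (GaloisField p 2)).commutes a
    simpa [MvPolynomial.algebraMap_eq, Polynomial.algebraMap_apply] using this
  have himg : biEquiv (GaloisField p 2) h =
      Polynomial.C (Polynomial.C (lam ^ p) * Polynomial.X ^ p + Polynomial.C lam * Polynomial.X)
        - Polynomial.C (Polynomial.C (lam ^ (p + 1))) * Polynomial.X ^ (p + 1) := by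
    rw [hh]
    simp only [map_sub, map_add, map_mul, map_pow, h0, h1, hC]
  have hirr : Irreducible h := by
    rw [← MulEquiv.irreducible_iff (biEquiv (GaloisField p 2)), himg]
    exact aux_eisenstein (GaloisField p 2) p hp2 lam hlam
  have hprime : Prime h := hirr.prime
  have hspan : (Ideal.span {h}).IsPrime :=
    (Ideal.span_singleton_prime hirr.ne_zero).mpr hprime
  haveI := hspan
  exact ⟨hirr, inferInstance, inferInstance⟩
end

section
/- Let R be an F_{p^2}-algebra and V a 3-dimensional F_{p^2}-vector space with basis e_1, e_2, e_3 on which the skew-hermitian form is given by (e_1,e_3) = tλ^p, (e_3,e_1) = tλ, (e_2,e_2) = t, all other pairings zero (t^p = -t, λ ∈ F_{p^2}^×). For a, b ∈ R, the rank-2 submodule U_{a,b} = ⟨e_1 + a e_3, e_2 + b e_3⟩ of V ⊗ R satisfies U_{a,b}^⊥ ⊆ U_{a,b} if and only if a^p λ^p + a λ - b^{p+1} λ^{p+1} = 0 in R. -/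
/-- The skew-hermitian pairing on `V ⊗ R = R³`, extended `R`-linearly in the first
variable and Frobenius-semilinearly in the second, for the form with `(e₁,e₃) = tλ^p`,
`(e₃,e₁) = tλ`, `(e₂,e₂) = t` and all other pairings zero (here indices `0,1,2` stand for
`e₁,e₂,e₃`). -/
noncomputable def pairingR (p : ℕ) [Fact p.Prime] (R : Type*) [CommRing R]
    [Algebra (GaloisField p 2) R] (t lam : GaloisField p 2) :
    (Fin 3 → R) → (Fin 3 → R) → R :=
  fun x y =>
    x 0 * algebraMap (GaloisField p 2) R (t * lam ^ p) * (y 2) ^ p +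
    x 2 * algebraMap (GaloisField p 2) R (t * lam) * (y 0) ^ p +
    x 1 * algebraMap (GaloisField p 2) R t * (y 1) ^ p


/-- The standard basis vector `eᵢ` of `R³`. -/
noncomputable def eVec (R : Type*) [CommRing R] (i : Fin 3) : Fin 3 → R := Pi.single i 1

section Aux

variable (p : ℕ) [Fact p.Prime] (R : Type*) [CommRing R]
    [Algebra (GaloisField p 2) R] (t lam : GaloisField p 2)

private lemma finSimp :
    (((2:Fin 3) = 0) = False) ∧ (((2:Fin 3) = 1) = False) ∧ (((0:Fin 3) = 2) = False) ∧
    (((1:Fin 3) = 2) = False) ∧ (((0:Fin 3) = 1) = False) ∧ (((1:Fin 3) = 0) = False) ∧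
    (((0:Fin 3) = 0) = True) ∧ (((1:Fin 3) = 1) = True) ∧ (((2:Fin 3) = 2) = True) := by
  refine ⟨?_, ?_, ?_, ?_, ?_, ?_, ?_, ?_, ?_⟩ <;> simp

private lemma pairing_u1 (a : R) (x : Fin 3 → R) :
    pairingR p R t lam x (eVec R 0 + a • eVec R 2) =
      x 0 * (algebraMap (GaloisField p 2) R t * algebraMap (GaloisField p 2) R lam ^ p) * a ^ p +
      x 2 * (algebraMap (GaloisField p 2) R t * algebraMap (GaloisField p 2) R lam) := by
  have hp0 : p ≠ 0 := (Fact.out : p.Prime).ne_zero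
  simp only [pairingR, eVec, Pi.add_apply, Pi.smul_apply, Pi.single_apply, smul_eq_mul,
    (finSimp).1, (finSimp).2.1, (finSimp).2.2.1, (finSimp).2.2.2.1, (finSimp).2.2.2.2.1,
    (finSimp).2.2.2.2.2.1, (finSimp).2.2.2.2.2.2.1, (finSimp).2.2.2.2.2.2.2.1,
    (finSimp).2.2.2.2.2.2.2.2, if_true, if_false, map_mul, map_pow]
  simp only [zero_add, add_zero, mul_one, mul_zero, one_pow, zero_pow hp0]

private lemma pairing_u2 (b : R) (x : Fin 3 → R) :
    pairingR p R t lam x (eVec R 1 + b • eVec R 2) =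
      x 0 * (algebraMap (GaloisField p 2) R t * algebraMap (GaloisField p 2) R lam ^ p) * b ^ p +
      x 1 * algebraMap (GaloisField p 2) R t := by
  have hp0 : p ≠ 0 := (Fact.out : p.Prime).ne_zero
  simp only [pairingR, eVec, Pi.add_apply, Pi.smul_apply, Pi.single_apply, smul_eq_mul,
    (finSimp).1, (finSimp).2.1, (finSimp).2.2.1, (finSimp).2.2.2.1, (finSimp).2.2.2.2.1,
    (finSimp).2.2.2.2.2.1, (finSimp).2.2.2.2.2.2.1, (finSimp).2.2.2.2.2.2.2.1,
    (finSimp).2.2.2.2.2.2.2.2, if_true, if_false, map_mul, map_pow]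
  simp only [zero_add, add_zero, mul_one, mul_zero, one_pow, zero_pow hp0]

private lemma pairing_semilinear [Nontrivial R] (a b c d : R) (x : Fin 3 → R) :
    pairingR p R t lam x (c • (eVec R 0 + a • eVec R 2) + d • (eVec R 1 + b • eVec R 2)) =
      c ^ p * pairingR p R t lam x (eVec R 0 + a • eVec R 2) +
      d ^ p * pairingR p R t lam x (eVec R 1 + b • eVec R 2) := by
  haveI : CharP R p := charP_of_injective_algebraMap (algebraMap (GaloisField p 2) R).injective p
  have hp0 : p ≠ 0 := (Fact.out : p.Prime).ne_zero
  simp only [pairingR, eVec, Pi.add_apply, Pi.smul_apply, Pi.single_apply, smul_eq_mul,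
    (finSimp).1, (finSimp).2.1, (finSimp).2.2.1, (finSimp).2.2.2.1, (finSimp).2.2.2.2.1,
    (finSimp).2.2.2.2.2.1, (finSimp).2.2.2.2.2.2.1, (finSimp).2.2.2.2.2.2.2.1,
    (finSimp).2.2.2.2.2.2.2.2, if_true, if_false, map_mul, map_pow]
  simp only [zero_add, add_zero, mul_one, mul_zero, one_pow, zero_pow hp0]
  rw [add_pow_char, mul_pow, mul_pow]
  ring

end Aux

/-- For `a, b ∈ R`, the rank-2 submodule `U_{a,b} = ⟨e₁ + a e₃, e₂ + b e₃⟩ ⊆ V ⊗ R`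
satisfies `U_{a,b}^⊥ ⊆ U_{a,b}` if and only if
`a^p λ^p + a λ - b^{p+1} λ^{p+1} = 0` in `R`. -/
theorem Uab_perp_subset_iff (p : ℕ) [Fact p.Prime] (hp : Odd p)
    (R : Type*) [CommRing R] [Algebra (GaloisField p 2) R]
    (t lam : GaloisField p 2) (ht : t ≠ 0) (hts : t ^ p = -t) (hlam : lam ≠ 0)
    (a b : R) :
    ({x : Fin 3 → R | ∀ u ∈ Submodule.span R
          {eVec R 0 + a • eVec R 2, eVec R 1 + b • eVec R 2},
        pairingR p R t lam x u = 0} ⊆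
      (Submodule.span R
          {eVec R 0 + a • eVec R 2, eVec R 1 + b • eVec R 2} : Set (Fin 3 → R))) ↔
      a ^ p * algebraMap (GaloisField p 2) R (lam ^ p) +
          a * algebraMap (GaloisField p 2) R lam -
          b ^ (p + 1) * algebraMap (GaloisField p 2) R (lam ^ (p + 1)) = 0 := by

  rcases subsingleton_or_nontrivial R with hR | hR
  · constructor
    · intro _; exact Subsingleton.elim _ _
    · intro _ x _
      exact (Subsingleton.elim (0 : Fin 3 → R) x) ▸ (Submodule.span R _).zero_mem
  · have hp0 : p ≠ 0 := (Fact.out : p.Prime).ne_zero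
    have hppos : 0 < p := Nat.pos_of_ne_zero hp0
    set A := algebraMap (GaloisField p 2) R with hA
    have hΛ : A lam ^ (p - 1) * A lam = A lam ^ p := by
      rw [← pow_succ, Nat.sub_add_cancel hppos]
    constructor
    · intro hsub
      set w : Fin 3 → R := ![1, -(A (lam ^ p)) * b ^ p, -(A (lam ^ (p - 1))) * a ^ p] with hw
      have hw0 : w 0 = 1 := rfl
      have hw1 : w 1 = -(A (lam ^ p)) * b ^ p := rfl
      have hw2 : w 2 = -(A (lam ^ (p - 1))) * a ^ p := rfl
      have hwu1 : pairingR p R t lam w (eVec R 0 + a • eVec R 2) = 0 := by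
        rw [pairing_u1, hw0, hw2, hA]
        simp only [map_pow]
        linear_combination (-(a ^ p * A t)) * hΛ
      have hwu2 : pairingR p R t lam w (eVec R 1 + b • eVec R 2) = 0 := by
        rw [pairing_u2, hw0, hw1, hA]
        simp only [map_pow]
        ring
      have hwperp : w ∈ {x : Fin 3 → R | ∀ u ∈ Submodule.span R
          {eVec R 0 + a • eVec R 2, eVec R 1 + b • eVec R 2},
          pairingR p R t lam x u = 0} := by
        intro u hu
        obtain ⟨c, d, rfl⟩ := Submodule.mem_span_pair.mp hu
        rw [pairing_semilinear, hwu1, hwu2]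
        ring
      obtain ⟨c, d, hcd⟩ := Submodule.mem_span_pair.mp (hsub hwperp)
      have h0 := congrFun hcd 0
      have h1 := congrFun hcd 1
      have h2 := congrFun hcd 2
      simp only [eVec, Pi.add_apply, Pi.smul_apply, Pi.single_apply,
        (finSimp).1, (finSimp).2.1, (finSimp).2.2.1, (finSimp).2.2.2.1, (finSimp).2.2.2.2.1,
        (finSimp).2.2.2.2.2.1, (finSimp).2.2.2.2.2.2.1, (finSimp).2.2.2.2.2.2.2.1,
        (finSimp).2.2.2.2.2.2.2.2, if_true, if_false, smul_eq_mul,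
        mul_one, mul_zero, add_zero, zero_add, hw0, hw1, hw2] at h0 h1 h2
      simp only [map_pow] at h1 h2
      rw [h0, one_mul] at h2
      rw [h1] at h2
      simp only [map_pow]
      linear_combination (A lam) * h2 - a ^ p * hΛ
    · intro heq x hx
      have hT : A t * A t⁻¹ = 1 := by rw [← map_mul, mul_inv_cancel₀ ht, map_one]
      have hL : A lam * A lam⁻¹ = 1 := by rw [← map_mul, mul_inv_cancel₀ hlam, map_one]
      have h1 := hx _ (Submodule.subset_span (Set.mem_insert _ _))
      have h2 := hx _ (Submodule.subset_span (Set.mem_insert_of_mem _ rfl))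
      rw [pairing_u1] at h1
      rw [pairing_u2] at h2
      have h1' : x 0 * A lam ^ p * a ^ p + x 2 * A lam = 0 := by
        linear_combination A t⁻¹ * h1 + (-(x 0 * A lam ^ p * a ^ p + x 2 * A lam)) * hT
      have h2' : x 0 * A lam ^ p * b ^ p + x 1 = 0 := by
        linear_combination A t⁻¹ * h2 + (-(x 0 * A lam ^ p * b ^ p + x 1)) * hT
      simp only [map_pow] at heq
      have key : (x 0 * a + x 1 * b - x 2) * A lam = 0 := by
        linear_combination x 0 * heq + (b * A lam) * h2' - h1'
      have hc0 : (x 0 • (eVec R 0 + a • eVec R 2) + x 1 • (eVec R 1 + b • eVec R 2)) 0 = x 0 := by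
        simp [eVec, Pi.single_apply]
      have hc1 : (x 0 • (eVec R 0 + a • eVec R 2) + x 1 • (eVec R 1 + b • eVec R 2)) 1 = x 1 := by
        simp [eVec, Pi.single_apply]
      have hc2 : (x 0 • (eVec R 0 + a • eVec R 2) + x 1 • (eVec R 1 + b • eVec R 2)) 2 = x 2 := by
        simp only [eVec, Pi.add_apply, Pi.smul_apply, Pi.single_apply,
          (finSimp).1, (finSimp).2.1, (finSimp).2.2.1, (finSimp).2.2.2.1, (finSimp).2.2.2.2.1,
          (finSimp).2.2.2.2.2.1, (finSimp).2.2.2.2.2.2.1, (finSimp).2.2.2.2.2.2.2.1,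
          (finSimp).2.2.2.2.2.2.2.2, if_true, if_false, smul_eq_mul,
          mul_one, mul_zero, add_zero, zero_add]
        linear_combination A lam⁻¹ * key - (x 0 * a + x 1 * b - x 2) * hL
      refine Submodule.mem_span_pair.mpr ⟨x 0, x 1, funext fun i => ?_⟩
      fin_cases i
      · exact hc0
      · exact hc1
      · exact hc2
end

section
/- Let f: X → X' be a morphism of reduced schemes of finite type over an algebraically closed field k. If f is finite, universally bijective (a universal homeomorphism), and the tangent map at every closed point is injective, then f is an isomorphism. -/
open AlgebraicGeometry CategoryTheory

section Aux

open Function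

/-- Auxiliary: surjectivity of a finite ring map detected via data at maximal ideals. -/
theorem aux_ring_surj_core {B A : Type*} [CommRing B] [CommRing A] (φ : B →+* A)
    (hfin : φ.Finite)
    (H : ∀ q : Ideal B, q.IsMaximal → ∃ p : Ideal A, p.IsPrime ∧ Ideal.comap φ p = q ∧
      (∀ M : Ideal A, M.IsPrime → Ideal.comap φ M = q → M = p) ∧
      (∀ a : A, ∃ (b : B) (s : A), s ∉ p ∧ s * (a - φ b) ∈ Ideal.map φ q)) :
    Function.Surjective φ := by
  letI := φ.toAlgebra
  haveI : Module.Finite B A := hfin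
  by_contra hns
  set N₀ : Submodule B A := LinearMap.range (Algebra.linearMap B A) with hN₀def
  have hN₀ : N₀ < ⊤ := by
    rcases lt_or_eq_of_le (le_top : N₀ ≤ ⊤) with h | h
    · exact h
    · exact absurd (fun a => (h ▸ Submodule.mem_top : a ∈ N₀)) hns
  haveI hCnt : Nontrivial (A ⧸ N₀) := Submodule.Quotient.nontrivial_iff.mpr hN₀.ne
  have hann : Module.annihilator B (A ⧸ N₀) ≠ ⊤ := by
    intro h
    obtain ⟨c, hc⟩ := exists_ne (0 : A ⧸ N₀)
    have h1 : (1 : B) ∈ Module.annihilator B (A ⧸ N₀) := h ▸ Submodule.mem_top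
    exact hc (by simpa using Module.mem_annihilator.mp h1 c)
  obtain ⟨q, hqmax, hannq⟩ := Ideal.exists_le_maximal _ hann
  obtain ⟨p, hp, hpq, huniq, hkey⟩ := H q hqmax
  set J : Ideal A := Ideal.map φ q with hJdef
  have hmain : ∀ a : A, ∃ b : B, a - φ b ∈ J := by
    intro a
    obtain ⟨b, s, hsp, hs⟩ := hkey a
    refine ⟨b, ?_⟩
    have hunit : IsUnit (Ideal.Quotient.mk J s) := by
      by_contra hnu
      obtain ⟨Mb, hMbmax, hMbs⟩ := exists_max_ideal_of_mem_nonunits (mem_nonunits_iff.mpr hnu)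
      set M := Ideal.comap (Ideal.Quotient.mk J) Mb with hMdef
      haveI hMmax : M.IsMaximal :=
        Ideal.comap_isMaximal_of_surjective _ Ideal.Quotient.mk_surjective
      have hJM : J ≤ M := fun x hx => by
        show Ideal.Quotient.mk J x ∈ Mb
        rw [Ideal.Quotient.eq_zero_iff_mem.mpr hx]; exact Mb.zero_mem
      have hle : q ≤ Ideal.comap φ M := fun b hb => hJM (Ideal.mem_map_of_mem φ hb)
      haveI : (Ideal.comap φ M).IsPrime := hMmax.isPrime.comap φ
      have hcomapM : Ideal.comap φ M = q :=
        (hqmax.eq_of_le this.ne_top hle).symm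
      have := huniq M hMmax.isPrime hcomapM
      exact hsp (this ▸ hMbs)
    have hz : Ideal.Quotient.mk J s * Ideal.Quotient.mk J (a - φ b) = 0 := by
      rw [← map_mul, Ideal.Quotient.eq_zero_iff_mem]; exact hs
    have := (hunit.mul_right_eq_zero).mp hz
    exact Ideal.Quotient.eq_zero_iff_mem.mp this
  have hsmul : (⊤ : Submodule B (A ⧸ N₀)) ≤ q • ⊤ := by
    rintro c -
    obtain ⟨a, rfl⟩ := Submodule.Quotient.mk_surjective N₀ c
    obtain ⟨b, hb⟩ := hmain a
    have heq : (Submodule.Quotient.mk a : A ⧸ N₀) = Submodule.Quotient.mk (a - φ b) := by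
      rw [Submodule.Quotient.eq]
      simpa using ⟨b, rfl⟩
    rw [heq]
    have h1 : a - φ b ∈ (q • (⊤ : Submodule B A)) := by
      rw [Ideal.smul_top_eq_map]; exact hb
    have h2 : (Submodule.Quotient.mk (a - φ b) : A ⧸ N₀)
        ∈ Submodule.map N₀.mkQ (q • (⊤ : Submodule B A)) :=
      Submodule.mem_map_of_mem h1
    rw [Submodule.map_smul''] at h2
    exact Submodule.smul_mono le_rfl le_top h2
  obtain ⟨r, hr1, hr0⟩ :=
    Submodule.exists_sub_one_mem_and_smul_eq_zero_of_fg_of_le_smul q ⊤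
      (Module.Finite.fg_top (R := B) (M := A ⧸ N₀)) hsmul
  have hrann : r ∈ Module.annihilator B (A ⧸ N₀) :=
    Module.mem_annihilator.mpr fun c => hr0 c trivial
  have : (1 : B) ∈ q := by
    have := q.sub_mem (hannq hrann) hr1
    simpa using this
  exact hqmax.ne_top (Ideal.eq_top_iff_one q |>.mpr this)

open IsLocalRing in
/-- If `S` is a local localization of `R` at a maximal ideal `p`, the composite
`R → S → S/m` is surjective. -/
theorem aux_residue_surj {R S : Type*} [CommRing R] [CommRing S] [Algebra R S]
    [IsLocalRing S]
    {p : Ideal R} [p.IsPrime] [IsLocalization.AtPrime S p] (hp : p.IsMaximal) :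
    Function.Surjective ((IsLocalRing.residue S).comp (algebraMap R S)) := by
  intro y
  obtain ⟨z, rfl⟩ := IsLocalRing.residue_surjective y
  obtain ⟨⟨a, s⟩, rfl⟩ := IsLocalization.mk'_surjective p.primeCompl z
  obtain ⟨t, i, hi, hti⟩ := hp.exists_inv (s.2 : s.1 ∉ p)
  refine ⟨a * t, ?_⟩
  have hspec := IsLocalization.mk'_spec S a s
  simp only [RingHom.comp_apply]
  have h1 : algebraMap R S (a * t) =
      IsLocalization.mk' S a s * algebraMap R S (s.1 * t) := by
    rw [map_mul (algebraMap R S) s.1 t, ← mul_assoc, hspec, ← map_mul]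
  have h2 : (s.1 : R) * t = 1 - i := by linear_combination hti
  rw [h1, h2, map_sub, map_one]
  have hmem : algebraMap R S i ∈ maximalIdeal S :=
    (IsLocalization.AtPrime.to_map_mem_maximal_iff S p i).mpr hi
  have : residue S (algebraMap R S i) = 0 := (residue_eq_zero_iff _).mpr hmem
  rw [map_mul, map_sub, map_one, this, sub_zero, mul_one]

open IsLocalRing in
/-- Compatibility of `primeIdealOf` with a scheme morphism. -/
lemma aux_primeIdealOf_comap {X X' : Scheme} (f : X ⟶ X') {U' : X'.Opens}
    (hU' : IsAffineOpen U') (hU : IsAffineOpen (f ⁻¹ᵁ U')) (x : X) (hx : x ∈ f ⁻¹ᵁ U') :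
    (hU'.primeIdealOf ⟨f.base x, hx⟩).asIdeal
      = Ideal.comap (f.app U').hom (hU.primeIdealOf ⟨x, hx⟩).asIdeal := by
  letI : Algebra Γ(X, f ⁻¹ᵁ U') (X.presheaf.stalk x) :=
    X.presheaf.algebra_section_stalk ⟨x, hx⟩
  letI : Algebra Γ(X', U') (X'.presheaf.stalk (f.base x)) :=
    X'.presheaf.algebra_section_stalk ⟨f.base x, hx⟩
  haveI h1 := hU.isLocalization_stalk ⟨x, hx⟩
  haveI h2 := hU'.isLocalization_stalk ⟨f.base x, hx⟩
  rw [← IsLocalization.AtPrime.comap_maximalIdeal (S := X.presheaf.stalk x)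
        (I := (hU.primeIdealOf ⟨x, hx⟩).asIdeal),
      ← IsLocalization.AtPrime.comap_maximalIdeal (S := X'.presheaf.stalk (f.base x))
        (I := (hU'.primeIdealOf ⟨f.base x, hx⟩).asIdeal)]
  ext b
  simp only [Ideal.mem_comap]
  change X'.presheaf.germ U' (f.base x) hx b ∈ _ ↔
    X.presheaf.germ (f ⁻¹ᵁ U') x hx ((f.app U') b) ∈ _
  rw [← f.germ_stalkMap_apply U' x hx]
  rw [mem_maximalIdeal, mem_maximalIdeal, mem_nonunits_iff, mem_nonunits_iff]
  exact not_congr (isUnit_map_iff (f.stalkMap x).hom _).symm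

open Topology in
/-- A scheme locally of finite type over a Jacobson ring has Jacobson underlying space. -/
lemma aux_jacobsonSpace {X : Scheme} {R : CommRingCat} [IsJacobsonRing ↑R]
    (fX : X ⟶ Spec R) [LocallyOfFiniteType fX] : JacobsonSpace X := by
  exact LocallyOfFiniteType.jacobsonSpace fX

end Aux

/-- Let `f : X ⟶ X'` be a morphism of reduced schemes of finite type over an
algebraically closed field `k`.  If `f` is finite, universally bijective (surjective and
universally injective), and the tangent map at every closed point is injective
(equivalently, the cotangent map `m'_{f(x)}/m'² → m_x/m_x²` is surjective, i.e.
`m_x = m'_{f(x)}·O_{X,x} + m_x²`), then `f` is an isomorphism. -/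
theorem iso_of_finite_bijective_tangent_injective
    (k : Type*) [Field k] [IsAlgClosed k]
    (X X' : Scheme) [IsReduced X] [IsReduced X']
    (fX : X ⟶ Spec (CommRingCat.of k)) (fX' : X' ⟶ Spec (CommRingCat.of k))
    [LocallyOfFiniteType fX] [QuasiCompact fX]
    [LocallyOfFiniteType fX'] [QuasiCompact fX']
    (f : X ⟶ X') (hcomm : f ≫ fX' = fX)
    [IsFinite f] [AlgebraicGeometry.Surjective f] [UniversallyInjective f]
    (htang : ∀ x : X, IsClosed ({x} : Set X) →
      IsLocalRing.maximalIdeal (X.presheaf.stalk x) ≤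
        Ideal.map (f.stalkMap x).hom
            (IsLocalRing.maximalIdeal (X'.presheaf.stalk (f.base x))) ⊔
          (IsLocalRing.maximalIdeal (X.presheaf.stalk x)) ^ 2) :
    IsIso f := by
  subst hcomm
  haveI : IsJacobsonRing ↑(CommRingCat.of k) := inferInstanceAs (IsJacobsonRing k)
  haveI : JacobsonSpace X := aux_jacobsonSpace (f ≫ fX')
  -- The key step: surjectivity on sections over affine opens.
  have hsurjapp : ∀ (U' : X'.Opens), IsAffineOpen U' → Function.Surjective (f.app U') := by
    intro U' hU'
    have hU : IsAffineOpen (f ⁻¹ᵁ U') :=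
      IsAffineHom.isAffine_preimage (f := f) U' hU'
    set φ := (f.app U').hom with hφdef
    have hφfin : RingHom.Finite φ := IsFinite.finite_app f U' hU'
    apply aux_ring_surj_core φ hφfin
    intro q hqmax
    haveI hqprime : q.IsPrime := hqmax.isPrime
    set Q : PrimeSpectrum Γ(X', U') := ⟨q, hqmax.isPrime⟩ with hQdef
    have hy'mem : hU'.fromSpec.base Q ∈ U' := by
      have : hU'.fromSpec.base Q ∈ Set.range hU'.fromSpec.base := Set.mem_range_self Q
      rwa [hU'.range_fromSpec] at this
    obtain ⟨x₀, hx₀⟩ := (‹AlgebraicGeometry.Surjective f›).surj (hU'.fromSpec.base Q)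
    have hx₀U : x₀ ∈ f ⁻¹ᵁ U' := show f.base x₀ ∈ U' by rw [hx₀]; exact hy'mem
    set P := hU.primeIdealOf ⟨x₀, hx₀U⟩ with hPdef
    have hsec : ∀ (P' : PrimeSpectrum Γ(X', U')) (h : hU'.fromSpec.base P' ∈ U'),
        hU'.primeIdealOf ⟨hU'.fromSpec.base P', h⟩ = P' := fun P' h =>
      hU'.fromSpec.isOpenEmbedding.injective (by rw [hU'.fromSpec_primeIdealOf])
    have hsecU : ∀ (P' : PrimeSpectrum Γ(X, f ⁻¹ᵁ U'))
        (h : hU.fromSpec.base P' ∈ f ⁻¹ᵁ U'),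
        hU.primeIdealOf ⟨hU.fromSpec.base P', h⟩ = P' := fun P' h =>
      hU.fromSpec.isOpenEmbedding.injective (by rw [hU.fromSpec_primeIdealOf])
    have hQ : hU'.primeIdealOf ⟨f.base x₀, hx₀U⟩ = Q := by
      have he : (⟨f.base x₀, hx₀U⟩ : U') = ⟨hU'.fromSpec.base Q, hy'mem⟩ := Subtype.ext hx₀
      rw [he, hsec]
    have hpq : Ideal.comap φ P.asIdeal = q := by
      rw [← aux_primeIdealOf_comap f hU' hU x₀ hx₀U, hQ]
    refine ⟨P.asIdeal, P.2, hpq, ?_, ?_⟩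
    · -- uniqueness of the prime over q
      intro M hM hMq
      have hxMrange : hU.fromSpec.base ⟨M, hM⟩ ∈ f ⁻¹ᵁ U' := by
        have : hU.fromSpec.base ⟨M, hM⟩ ∈ Set.range hU.fromSpec.base := Set.mem_range_self _
        rwa [hU.range_fromSpec] at this
      set xM := hU.fromSpec.base ⟨M, hM⟩ with hxMdef
      have h1 : (hU'.primeIdealOf ⟨f.base xM, hxMrange⟩).asIdeal = q := by
        rw [aux_primeIdealOf_comap f hU' hU xM hxMrange, hsecU ⟨M, hM⟩ hxMrange]
        exact hMq
      have h2 : hU'.primeIdealOf ⟨f.base xM, hxMrange⟩ = Q := PrimeSpectrum.ext h1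
      have h3 : f.base xM = f.base x₀ := by
        have hfs := hU'.fromSpec_primeIdealOf ⟨f.base xM, hxMrange⟩
        rw [h2] at hfs
        rw [hx₀]
        exact hfs.symm
      have h4 : xM = x₀ := f.injective h3
      have h5 := hsecU ⟨M, hM⟩ hxMrange
      rw [show (⟨xM, hxMrange⟩ : ↥(f ⁻¹ᵁ U')) = ⟨x₀, hx₀U⟩ from Subtype.ext h4] at h5
      exact congrArg PrimeSpectrum.asIdeal h5.symm
    · -- the main local computation at the closed point x₀
      -- integrality and maximality
      letI algφ : Algebra Γ(X', U') Γ(X, f ⁻¹ᵁ U') := φ.toAlgebra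
      haveI : Module.Finite Γ(X', U') Γ(X, f ⁻¹ᵁ U') := hφfin
      haveI : Algebra.IsIntegral Γ(X', U') Γ(X, f ⁻¹ᵁ U') := Algebra.IsIntegral.of_finite _ _
      haveI hpmax : P.asIdeal.IsMaximal := by
        refine Ideal.isMaximal_of_isIntegral_of_isMaximal_comap (R := Γ(X', U')) P.asIdeal ?_
        show (Ideal.comap φ P.asIdeal).IsMaximal
        rw [hpq]; exact hqmax
      -- x₀ is a closed point of X
      have hx₀closed : IsClosed ({x₀} : Set X) := by
        apply isClosed_singleton_of_isLocallyClosed_singleton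
        have hPcl : IsClosed ({P} : Set (Spec Γ(X, f ⁻¹ᵁ U'))) :=
          (PrimeSpectrum.isClosed_singleton_iff_isMaximal P).mpr hpmax
        have himg : hU.fromSpec.base '' ({P} : Set (Spec Γ(X, f ⁻¹ᵁ U'))) = {x₀} := by
          refine Set.image_singleton.trans ?_
          rw [hPdef, hU.fromSpec_primeIdealOf]
        rw [← himg]
        refine IsLocallyClosed.image hPcl.isLocallyClosed
          hU.fromSpec.isOpenEmbedding.isInducing ?_
        rw [hU.range_fromSpec]
        exact (f ⁻¹ᵁ U').2.isLocallyClosed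
      have htg := htang x₀ hx₀closed
      -- localization structure on the stalks
      letI : Algebra Γ(X, f ⁻¹ᵁ U') (X.presheaf.stalk x₀) :=
        X.presheaf.algebra_section_stalk ⟨x₀, hx₀U⟩
      letI : Algebra Γ(X', U') (X'.presheaf.stalk (f.base x₀)) :=
        X'.presheaf.algebra_section_stalk ⟨f.base x₀, hx₀U⟩
      haveI hLoc : IsLocalization.AtPrime (X.presheaf.stalk x₀) P.asIdeal :=
        hU.isLocalization_stalk ⟨x₀, hx₀U⟩
      haveI hLoc' : IsLocalization.AtPrime (X'.presheaf.stalk (f.base x₀)) q := by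
        have := hU'.isLocalization_stalk ⟨f.base x₀, hx₀U⟩
        rwa [hQ] at this
      -- rewrite the image of the maximal ideal of the target stalk
      set Jq : Ideal Γ(X, f ⁻¹ᵁ U') := Ideal.map φ q with hJqdef
      have hcompat : RingHom.comp (f.stalkMap x₀).hom
            (algebraMap Γ(X', U') (X'.presheaf.stalk (f.base x₀)))
          = RingHom.comp (algebraMap Γ(X, f ⁻¹ᵁ U') (X.presheaf.stalk x₀)) φ := by
        ext b
        exact f.germ_stalkMap_apply U' x₀ hx₀U b
      have hmapm' : Ideal.map (f.stalkMap x₀).hom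
            (IsLocalRing.maximalIdeal (X'.presheaf.stalk (f.base x₀)))
          = Ideal.map (algebraMap Γ(X, f ⁻¹ᵁ U') (X.presheaf.stalk x₀)) Jq := by
        rw [← IsLocalization.AtPrime.map_eq_maximalIdeal q (X'.presheaf.stalk (f.base x₀)),
          Ideal.map_map, hcompat, ← Ideal.map_map]
      rw [hmapm'] at htg
      -- Noetherian hypotheses
      haveI hNoethA : IsNoetherianRing Γ(X, f ⁻¹ᵁ U') := by
        have hft := HasRingHomProperty.appLE (P := @LocallyOfFiniteType) (f ≫ fX') ‹_›
          ⟨⊤, isAffineOpen_top _⟩ ⟨f ⁻¹ᵁ U', hU⟩ le_top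
        have hι : Function.Surjective (Scheme.ΓSpecIso (CommRingCat.of k)).inv :=
          (ConcreteCategory.bijective_of_isIso _).2
        have hcompft : RingHom.FiniteType
            ((((f ≫ fX').appLE ⊤ (f ⁻¹ᵁ U') le_top).hom : Γ(Spec (CommRingCat.of k), ⊤) →+* _).comp
              ((Scheme.ΓSpecIso (CommRingCat.of k)).inv.hom : _ →+* _)) :=
          hft.comp (RingHom.FiniteType.of_surjective _ hι)
        letI : Algebra k Γ(X, f ⁻¹ᵁ U') :=
          (((((f ≫ fX').appLE ⊤ (f ⁻¹ᵁ U') le_top).hom : _ →+* _).comp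
            ((Scheme.ΓSpecIso (CommRingCat.of k)).inv.hom : _ →+* _)) : k →+* _).toAlgebra
        haveI : Algebra.FiniteType k Γ(X, f ⁻¹ᵁ U') := hcompft
        exact Algebra.FiniteType.isNoetherianRing k _
      haveI hNoethR : IsNoetherianRing ↑(X.presheaf.stalk x₀) :=
        IsLocalization.isNoetherianRing P.asIdeal.primeCompl _ hNoethA
      -- Nakayama: the maximal ideal of the stalk equals Jq extended
      set m := IsLocalRing.maximalIdeal ↑(X.presheaf.stalk x₀) with hmdef
      set JR : Ideal ↑(X.presheaf.stalk x₀) :=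
        Ideal.map (algebraMap Γ(X, f ⁻¹ᵁ U') (X.presheaf.stalk x₀)) Jq with hJRdef
      have hJqp : Jq ≤ P.asIdeal := Ideal.map_le_iff_le_comap.mpr (le_of_eq hpq.symm)
      have hmJR : m ≤ JR := by
        have hle2 : Submodule.map (Submodule.mkQ (JR : Submodule _ _))
              (m : Submodule _ _)
            ≤ m • Submodule.map (Submodule.mkQ (JR : Submodule _ _)) (m : Submodule _ _) := by
          rintro _ ⟨y, hy, rfl⟩
          have h2 := htg hy
          have h3 : (Submodule.mkQ (JR : Submodule _ _)) y
              ∈ Submodule.map (Submodule.mkQ (JR : Submodule _ _))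
                  ((JR : Submodule _ _) ⊔ m ^ 2) := Submodule.mem_map_of_mem h2
          rw [Submodule.map_sup] at h3
          have h4 : Submodule.map (Submodule.mkQ (JR : Submodule _ _))
              (JR : Submodule _ _) = ⊥ := by
            rw [eq_bot_iff]
            rintro _ ⟨z, hz, rfl⟩
            simpa [Submodule.mem_bot, Submodule.Quotient.mk_eq_zero,
              Ideal.Quotient.eq_zero_iff_mem] using hz
          have h5 : (m : Ideal _) ^ 2 = m • m := by rw [pow_two, Ideal.smul_eq_mul]
          rw [h4, h5, Submodule.map_smul''] at h3
          simpa using h3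
        have hbot := Submodule.eq_bot_of_le_smul_of_le_jacobson_bot m _
          (IsNoetherian.noetherian _) hle2
          (by rw [IsLocalRing.jacobson_eq_maximalIdeal (⊥ : Ideal _) bot_ne_top])
        intro z hz
        have hmem : (Submodule.mkQ (JR : Submodule _ _)) z ∈ (⊥ : Submodule _ _) :=
          hbot ▸ Submodule.mem_map_of_mem hz
        rwa [Submodule.mem_bot, Submodule.mkQ_apply, Submodule.Quotient.mk_eq_zero] at hmem
      -- residue field surjectivity via the Nullstellensatz
      have hressurj : Function.Surjective
          ((IsLocalRing.residue ↑(X.presheaf.stalk x₀)).comp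
            (algebraMap Γ(X, f ⁻¹ᵁ U') (X.presheaf.stalk x₀))) :=
        aux_residue_surj hpmax
      set αA : k →+* Γ(X, f ⁻¹ᵁ U') :=
        ((((f ≫ fX').appLE ⊤ (f ⁻¹ᵁ U') le_top).hom : _ →+* _).comp
          ((Scheme.ΓSpecIso (CommRingCat.of k)).inv.hom : _ →+* _)) with hαAdef
      set αB : k →+* Γ(X', U') :=
        (((fX'.appLE ⊤ U' le_top).hom : _ →+* _).comp
          ((Scheme.ΓSpecIso (CommRingCat.of k)).inv.hom : _ →+* _)) with hαBdef
      have hαcomm : ∀ c : k, φ (αB c) = αA c := by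
        intro c
        have h1 : fX'.appLE ⊤ U' le_top ≫ f.appLE U' (f ⁻¹ᵁ U') le_rfl
            = (f ≫ fX').appLE ⊤ (f ⁻¹ᵁ U') le_top :=
          Scheme.Hom.appLE_comp_appLE f fX' ⊤ U' (f ⁻¹ᵁ U') le_top le_rfl
        have h2 : f.appLE U' (f ⁻¹ᵁ U') le_rfl = f.app U' := Scheme.Hom.appLE_eq_app f
        have hpt := ConcreteCategory.congr_hom h1 ((Scheme.ΓSpecIso (CommRingCat.of k)).inv c)
        rw [h2] at hpt
        exact hpt
      -- θ : k → residue field is surjective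
      set θ : k →+* IsLocalRing.ResidueField ↑(X.presheaf.stalk x₀) :=
        ((IsLocalRing.residue ↑(X.presheaf.stalk x₀)).comp
          (algebraMap Γ(X, f ⁻¹ᵁ U') (X.presheaf.stalk x₀))).comp αA with hθdef
      have hθft : θ.FiniteType := by
        have hι : Function.Surjective (Scheme.ΓSpecIso (CommRingCat.of k)).inv :=
          (ConcreteCategory.bijective_of_isIso _).2
        have hft := HasRingHomProperty.appLE (P := @LocallyOfFiniteType) (f ≫ fX') ‹_›
          ⟨⊤, isAffineOpen_top _⟩ ⟨f ⁻¹ᵁ U', hU⟩ le_top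
        exact (RingHom.FiniteType.of_surjective _ hressurj).comp
          (hft.comp (RingHom.FiniteType.of_surjective _ hι))
      have hθfin : θ.Finite := RingHom.finite_iff_finiteType_of_isJacobsonRing.mpr hθft
      have hθsurj : Function.Surjective θ := by
        letI := θ.toAlgebra
        haveI : Algebra.IsIntegral k (IsLocalRing.ResidueField ↑(X.presheaf.stalk x₀)) :=
          Algebra.isIntegral_def.mpr hθfin.to_isIntegral
        exact IsAlgClosed.algebraMap_bijective_of_isIntegral.2
      -- conclusion of the local computation
      intro a
      obtain ⟨c, hc⟩ := hθsurj
        ((IsLocalRing.residue ↑(X.presheaf.stalk x₀))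
          ((algebraMap Γ(X, f ⁻¹ᵁ U') (X.presheaf.stalk x₀)) a))
      have hc' : (IsLocalRing.residue ↑(X.presheaf.stalk x₀))
          ((algebraMap Γ(X, f ⁻¹ᵁ U') (X.presheaf.stalk x₀)) (a - φ (αB c))) = 0 := by
        rw [map_sub, map_sub, hαcomm c]
        have : θ c = (IsLocalRing.residue ↑(X.presheaf.stalk x₀))
            ((algebraMap Γ(X, f ⁻¹ᵁ U') (X.presheaf.stalk x₀)) (αA c)) := rfl
        rw [← this, hc]
        exact sub_self _
      have hmem : (algebraMap Γ(X, f ⁻¹ᵁ U') (X.presheaf.stalk x₀)) (a - φ (αB c)) ∈ JR :=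
        hmJR ((IsLocalRing.residue_eq_zero_iff _).mp hc')
      rw [hJRdef] at hmem
      obtain ⟨⟨j, s⟩, hjs⟩ :=
        (IsLocalization.mem_map_algebraMap_iff P.asIdeal.primeCompl _).mp hmem
      have hzero : (algebraMap Γ(X, f ⁻¹ᵁ U') (X.presheaf.stalk x₀))
          ((a - φ (αB c)) * s.1 - j.1) = 0 := by
        rw [map_sub, map_mul, hjs, sub_self]
      obtain ⟨t, ht⟩ := (IsLocalization.map_eq_zero_iff P.asIdeal.primeCompl _ _).mp hzero
      refine ⟨αB c, s.1 * t.1, ?_, ?_⟩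
      · exact (P.asIdeal.primeCompl.mul_mem s.2 t.2 : _ ∈ P.asIdeal.primeCompl)
      · have hcalc : (s.1 * t.1) * (a - φ (αB c)) = t.1 * j.1 := by linear_combination ht
        rw [hcalc]
        exact Jq.mul_mem_left t.1 j.2
  -- conclude: f is a closed immersion, hence an isomorphism
  haveI : IsClosedImmersion f := by
    rw [isClosedImmersion_iff_isAffineHom]
    exact ⟨inferInstance, hsurjapp⟩
  exact isIso_of_isClosedImmersion_of_surjective f
end

section
/- Let Λ and Λ' be distinct lattices in a Q_{p^2}-vector space C, each satisfying p^{i+1}Λ^∨ ⊊ Λ ⊂ p^i Λ^∨ (membership in the set L_i). If there exists a lattice A over W(k) (k algebraically closed of char p) with p^{i+1}A^∨ ⊂^1 A and A ⊂ Λ_k and A ⊂ Λ'_k, then Λ ∩ Λ' also satisfies p^{i+1}(Λ∩Λ')^∨ ⊊ Λ∩Λ' ⊂ p^i(Λ∩Λ')^∨, i.e., Λ ∩ Λ' ∈ L_i; moreover V(Λ)(k) ∩ V(Λ')(k) = V(Λ∩Λ')(k). -/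
/-- The ring of integers `ℤ_{p²}` of the unramified quadratic extension of `ℚ_p`,
realized as the Witt vectors of `𝔽_{p²}`. -/
abbrev Zp2 (p : ℕ) [Fact p.Prime] : Type := WittVector p (GaloisField p 2)

/-- The unramified quadratic extension `ℚ_{p²}` of `ℚ_p`, as the fraction field of
`ℤ_{p²}`. -/
abbrev Qp2 (p : ℕ) [Fact p.Prime] : Type := FractionRing (Zp2 p)

/-- The nontrivial Galois automorphism (Frobenius) `σ` of `ℤ_{p²}`. -/
noncomputable def sigmaZ (p : ℕ) [Fact p.Prime] : Zp2 p ≃+* Zp2 p :=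
  WittVector.frobeniusEquiv p (GaloisField p 2)

/-- The nontrivial Galois automorphism `σ` of `ℚ_{p²}`. -/
noncomputable def sigmaQ (p : ℕ) [Fact p.Prime] : Qp2 p ≃+* Qp2 p :=
  IsFractionRing.ringEquivOfRingEquiv (sigmaZ p)

section Forms

variable (p : ℕ) [Fact p.Prime]
variable {V : Type*} [AddCommGroup V] [Module (Qp2 p) V]

/-- `B` is a skew-hermitian form on the `ℚ_{p²}`-vector space `V`: biadditive, linear in
the first variable, `σ`-semilinear in the second, with `{x,y} = -{y,x}^σ`. -/
def IsSkewHermitian (B : V → V → Qp2 p) : Prop :=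
  (∀ x y z, B (x + y) z = B x z + B y z) ∧
  (∀ x y z, B x (y + z) = B x y + B x z) ∧
  (∀ (c : Qp2 p) x y, B (c • x) y = c * B x y) ∧
  (∀ (c : Qp2 p) x y, B x (c • y) = sigmaQ p c * B x y) ∧
  (∀ x y, B x y = -(sigmaQ p (B y x)))

/-- Nondegeneracy of a form. -/
def IsNondeg (B : V → V → Qp2 p) : Prop := ∀ x, (∀ y, B x y = 0) → x = 0

/-- Two forms are equivalent if related by a linear automorphism of `V`. -/
def FormEquiv (B B' : V → V → Qp2 p) : Prop :=
  ∃ g : V ≃ₗ[Qp2 p] V, ∀ x y, B' x y = B (g x) (g y)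

/-- The sesquilinear form associated to a matrix `M`: `(x, y) ↦ ∑ xᵢ Mᵢⱼ σ(yⱼ)`. -/
noncomputable def matForm {n : ℕ} (M : Matrix (Fin n) (Fin n) (Qp2 p)) :
    (Fin n → Qp2 p) → (Fin n → Qp2 p) → Qp2 p :=
  fun x y => ∑ i, ∑ j, x i * M i j * sigmaQ p (y j)

/-- The matrix `t·I_n`. -/
noncomputable def tIn (t : Zp2 p) (n : ℕ) : Matrix (Fin n) (Fin n) (Qp2 p) :=
  algebraMap (Zp2 p) (Qp2 p) t • (1 : Matrix (Fin n) (Fin n) (Qp2 p))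

/-- The matrix `t·J_n`, where `J_n = diag(p, 1, …, 1)`. -/
noncomputable def tJn (t : Zp2 p) (n : ℕ) : Matrix (Fin n) (Fin n) (Qp2 p) :=
  algebraMap (Zp2 p) (Qp2 p) t •
    Matrix.diagonal (fun i : Fin n => if (i : ℕ) = 0 then (p : Qp2 p) else 1)

end Forms

/-- The `R`-module `M` has length `m`, expressed via composition series. -/
def ModuleLengthEq (R : Type*) [Ring R] (M : Type*) [AddCommGroup M] [Module R M]
    (m : ℕ) : Prop :=
  ∃ s : CompositionSeries (Submodule R M), s.head = ⊥ ∧ s.last = ⊤ ∧ s.length = m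

section Lattices

variable (R K : Type*) [CommRing R] [CommRing K] [Algebra R K]
variable {V : Type*} [AddCommGroup V] [Module K V] [Module R V] [IsScalarTower R K V]

/-- `L` is an `R`-lattice in the `K`-vector space `V`: finitely generated over `R` and
spanning `V` over `K`. -/
def IsLatticeG (L : Submodule R V) : Prop :=
  L.FG ∧ Submodule.span K (L : Set V) = ⊤

/-- The dual lattice `L^∨ = {y : B(y, L) ⊆ R}` of `L` with respect to a form `B` which is
additive and `K`-linear in the first variable. -/
noncomputable def dualLatticeG (B : V → V → K)
    (hadd : ∀ x y z, B (x + y) z = B x z + B y z)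
    (hsmul : ∀ (c : K) x y, B (c • x) y = c * B x y)
    (L : Submodule R V) : Submodule R V where
  carrier := {y | ∀ x ∈ L, B y x ∈ (algebraMap R K).range}
  zero_mem' := by
    intro x _
    have h : B ((0 : K) • (0 : V)) x = 0 * B 0 x := hsmul 0 0 x
    rw [zero_smul, zero_mul] at h
    exact h ▸ Subring.zero_mem _
  add_mem' := by
    intro a b ha hb x hx
    rw [hadd a b x]
    exact Subring.add_mem _ (ha x hx) (hb x hx)
  smul_mem' := by
    intro c y hy x hx
    have h : c • y = (algebraMap R K c) • y := (algebraMap_smul K c y).symm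
    rw [h, hsmul]
    exact Subring.mul_mem _ ⟨c, rfl⟩ (hy x hx)

/-- Scaling of an `R`-submodule of `V` by a scalar `c ∈ K`. -/
noncomputable def scaleLatG (c : K) (L : Submodule R V) : Submodule R V :=
  L.map ((c • (LinearMap.id : V →ₗ[K] V)).restrictScalars R)

/-- `HasIndexG R K L L' m` says `L ⊆ L'` and the quotient `L'/L` has length `m` as an
`R`-module (the index of `L` in `L'` is `m`). -/
def HasIndexG (L L' : Submodule R V) (m : ℕ) : Prop :=
  L ≤ L' ∧ ModuleLengthEq R (↥L' ⧸ Submodule.comap L'.subtype L) m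

end Lattices

section WittBase

variable (p : ℕ) [Fact p.Prime]
variable (k : Type*) [Field k] [IsAlgClosed k] [CharP k p]

/-- The Witt ring `W(k)` of an algebraically closed field `k` of characteristic `p`. -/
abbrev Wk : Type _ := WittVector p k

/-- The fraction field `W(k)_ℚ` of `W(k)`. -/
abbrev Kk : Type _ := FractionRing (Wk p k)

/-- The Frobenius `σ` of `W(k)`. -/
noncomputable def sigmaW : Wk p k ≃+* Wk p k := WittVector.frobeniusEquiv p k

/-- The Frobenius `σ` of `W(k)_ℚ`. -/
noncomputable def sigmaK : Kk p k ≃+* Kk p k :=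
  IsFractionRing.ringEquivOfRingEquiv (sigmaW p k)

end WittBase

section Aux

variable {R K : Type*} [CommRing R] [CommRing K] [Algebra R K]
variable {V : Type*} [AddCommGroup V] [Module K V] [Module R V] [IsScalarTower R K V]

theorem dualLatticeG_antitone (B : V → V → K)
    (hadd : ∀ x y z, B (x + y) z = B x z + B y z)
    (hsmul : ∀ (c : K) x y, B (c • x) y = c * B x y)
    {L L' : Submodule R V} (h : L ≤ L') :
    dualLatticeG R K B hadd hsmul L' ≤ dualLatticeG R K B hadd hsmul L :=
  fun _ hy x hx => hy x (h hx)

theorem scaleLatG_mono (c : K) {L L' : Submodule R V} (h : L ≤ L') :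
    scaleLatG R K c L ≤ scaleLatG R K c L' :=
  Submodule.map_mono h

theorem hasIndexG_one_lt {L L' : Submodule R V} (h : HasIndexG R L L' 1) : L < L' := by
  obtain ⟨hle, s, hhead, hlast, hlen⟩ := h
  refine lt_of_le_of_ne hle ?_
  rintro rfl
  have hbt : (⊥ : Submodule R (↥L ⧸ Submodule.comap L.subtype L)) = ⊤ := by
    have hc : Submodule.comap L.subtype L = ⊤ := by
      ext x; simp [Submodule.mem_comap, x.2]
    have hsub : Subsingleton (↥L ⧸ Submodule.comap L.subtype L) :=
      Submodule.Quotient.subsingleton_iff.mpr hc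
    exact Subsingleton.elim _ _
  have hstep := s.step ⟨0, by omega⟩
  have h0 : s.toFun (Fin.castSucc ⟨0, by omega⟩) = ⊥ := by
    have : Fin.castSucc (⟨0, by omega⟩ : Fin s.length) = 0 := by
      ext; simp
    rw [this]; exact hhead
  have h1 : s.toFun (Fin.succ ⟨0, by omega⟩) = ⊤ := by
    have : Fin.succ (⟨0, by omega⟩ : Fin s.length) = Fin.last s.length := by
      ext; simp [hlen]
    rw [this]; exact hlast
  rw [h0, h1] at hstep
  exact absurd hbt (JordanHolderLattice.lt_of_isMaximal hstep).ne

end Aux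

section Stmt19

variable (p : ℕ) [Fact p.Prime]
variable (k : Type*) [Field k] [IsAlgClosed k] [CharP k p]
variable {V : Type*} [AddCommGroup V] [Module (Kk p k) V] [Module (Wk p k) V]
  [IsScalarTower (Wk p k) (Kk p k) V]

/-- Let `Λ ≠ Λ'` be (`τ`-invariant) lattices in `C_k`, each in `L_i`, i.e. satisfying
`p^{i+1}Λ^∨ ⊊ Λ ⊆ p^i Λ^∨`.  If there is a lattice `A` with `p^{i+1}A^∨ ⊂¹ A`,
`A ⊆ Λ` and `A ⊆ Λ'`, then `Λ ⊓ Λ'` again satisfies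
`p^{i+1}(Λ⊓Λ')^∨ ⊊ Λ⊓Λ' ⊆ p^i (Λ⊓Λ')^∨` (i.e. `Λ ⊓ Λ' ∈ L_i`), and
`V(Λ)(k) ∩ V(Λ')(k) = V(Λ⊓Λ')(k)`. -/
theorem inf_mem_Li_and_inter (hp : Odd p)
    (B : V → V → Kk p k)
    (hadd₁ : ∀ x y z, B (x + y) z = B x z + B y z)
    (hadd₂ : ∀ x y z, B x (y + z) = B x y + B x z)
    (hsmul₁ : ∀ (c : Kk p k) x y, B (c • x) y = c * B x y)
    (hsmul₂ : ∀ (c : Kk p k) x y, B x (c • y) = sigmaK p k c * B x y)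
    (hperf : ∀ x, (∀ y, B x y = 0) → x = 0)
    (τ : V ≃+ V)
    (hτs : ∀ (c : Kk p k) x, τ (c • x) = (sigmaK p k (sigmaK p k c)) • τ x)
    (hskew : ∀ x y, B x y = -(sigmaK p k (B y (τ.symm x))))
    (i : ℤ)
    (Λ Λ' : Submodule (Wk p k) V)
    (hLat : IsLatticeG (Wk p k) (Kk p k) Λ) (hLat' : IsLatticeG (Wk p k) (Kk p k) Λ')
    (hτΛ : ⇑τ '' (Λ : Set V) = (Λ : Set V)) (hτΛ' : ⇑τ '' (Λ' : Set V) = (Λ' : Set V))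
    (hΛ1 : scaleLatG (Wk p k) (Kk p k) ((p : Kk p k) ^ (i + 1))
      (dualLatticeG (Wk p k) (Kk p k) B hadd₁ hsmul₁ Λ) < Λ)
    (hΛ2 : Λ ≤ scaleLatG (Wk p k) (Kk p k) ((p : Kk p k) ^ i)
      (dualLatticeG (Wk p k) (Kk p k) B hadd₁ hsmul₁ Λ))
    (hΛ'1 : scaleLatG (Wk p k) (Kk p k) ((p : Kk p k) ^ (i + 1))
      (dualLatticeG (Wk p k) (Kk p k) B hadd₁ hsmul₁ Λ') < Λ')
    (hΛ'2 : Λ' ≤ scaleLatG (Wk p k) (Kk p k) ((p : Kk p k) ^ i)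
      (dualLatticeG (Wk p k) (Kk p k) B hadd₁ hsmul₁ Λ'))
    (hne : Λ ≠ Λ')
    (A : Submodule (Wk p k) V) (hA : IsLatticeG (Wk p k) (Kk p k) A)
    (hA1 : HasIndexG (Wk p k)
      (scaleLatG (Wk p k) (Kk p k) ((p : Kk p k) ^ (i + 1))
        (dualLatticeG (Wk p k) (Kk p k) B hadd₁ hsmul₁ A)) A 1)
    (hAΛ : A ≤ Λ) (hAΛ' : A ≤ Λ') :
    (scaleLatG (Wk p k) (Kk p k) ((p : Kk p k) ^ (i + 1))
        (dualLatticeG (Wk p k) (Kk p k) B hadd₁ hsmul₁ (Λ ⊓ Λ')) < Λ ⊓ Λ' ∧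
      Λ ⊓ Λ' ≤ scaleLatG (Wk p k) (Kk p k) ((p : Kk p k) ^ i)
        (dualLatticeG (Wk p k) (Kk p k) B hadd₁ hsmul₁ (Λ ⊓ Λ'))) ∧
    ∀ A' : Submodule (Wk p k) V,
      (A' ≤ Λ ∧ A' ≤ Λ' ∧ HasIndexG (Wk p k)
          (scaleLatG (Wk p k) (Kk p k) ((p : Kk p k) ^ (i + 1))
            (dualLatticeG (Wk p k) (Kk p k) B hadd₁ hsmul₁ A')) A' 1) ↔
        (A' ≤ Λ ⊓ Λ' ∧ HasIndexG (Wk p k)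
          (scaleLatG (Wk p k) (Kk p k) ((p : Kk p k) ^ (i + 1))
            (dualLatticeG (Wk p k) (Kk p k) B hadd₁ hsmul₁ A')) A' 1) := by
  have hAlt : scaleLatG (Wk p k) (Kk p k) ((p : Kk p k) ^ (i + 1))
      (dualLatticeG (Wk p k) (Kk p k) B hadd₁ hsmul₁ A) < A := hasIndexG_one_lt hA1
  have hAinf : A ≤ Λ ⊓ Λ' := le_inf hAΛ hAΛ'
  have hdual : dualLatticeG (Wk p k) (Kk p k) B hadd₁ hsmul₁ (Λ ⊓ Λ') ≤
      dualLatticeG (Wk p k) (Kk p k) B hadd₁ hsmul₁ A :=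
    dualLatticeG_antitone B hadd₁ hsmul₁ hAinf
  have hle1 : scaleLatG (Wk p k) (Kk p k) ((p : Kk p k) ^ (i + 1))
      (dualLatticeG (Wk p k) (Kk p k) B hadd₁ hsmul₁ (Λ ⊓ Λ')) ≤ Λ ⊓ Λ' :=
    le_trans (scaleLatG_mono _ hdual) (le_trans hAlt.le hAinf)
  refine ⟨⟨lt_of_le_of_ne hle1 ?_, ?_⟩, ?_⟩
  · intro heq
    have h2 : A ≤ scaleLatG (Wk p k) (Kk p k) ((p : Kk p k) ^ (i + 1))
        (dualLatticeG (Wk p k) (Kk p k) B hadd₁ hsmul₁ A) :=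
      le_trans (le_trans hAinf (le_of_eq heq.symm)) (scaleLatG_mono _ hdual)
    exact absurd (le_antisymm hAlt.le h2) hAlt.ne
  · calc Λ ⊓ Λ' ≤ Λ := inf_le_left
      _ ≤ scaleLatG (Wk p k) (Kk p k) ((p : Kk p k) ^ i)
          (dualLatticeG (Wk p k) (Kk p k) B hadd₁ hsmul₁ Λ) := hΛ2
      _ ≤ scaleLatG (Wk p k) (Kk p k) ((p : Kk p k) ^ i)
          (dualLatticeG (Wk p k) (Kk p k) B hadd₁ hsmul₁ (Λ ⊓ Λ')) :=
        scaleLatG_mono _ (dualLatticeG_antitone B hadd₁ hsmul₁ inf_le_left)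
  · intro A'
    exact ⟨fun ⟨h1, h2, h3⟩ => ⟨le_inf h1 h2, h3⟩,
      fun ⟨h, h3⟩ => ⟨h.trans inf_le_left, h.trans inf_le_right, h3⟩⟩

end Stmt19
end
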